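/- arXiv:1611.07866 — 3 statements merged into one kernel-verified Lean document; each statement's English description precedes it below -/
import Mathlib

section
/- Let G = (U, V, E) be a bipartite graph, let S_opt ⊆ U be a finite set of size k, all of whose vertices have degree exactly r, and let T_opt = N(S_opt) have size kr/d (so the average back-degree from T_opt into S_opt is d). Then for every δ > 0, there exist sets S' ⊆ S_opt with |S'| ≥ k/2 and T' ⊆ T_opt such that: (1) every vertex v ∈ T' has at least δd/2 neighbors in S', and (2) every vertex u ∈ S' has at most δr neighbors in T_opt \ T'. -/
open Finset

/-- Pruning claim: given a bipartite graph with left side `U`, right side `V`,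
`S_opt ⊆ U` of size `k` with all vertices of degree exactly `r`, `T_opt = N(S_opt)`
with average back-degree `d = k·r/|T_opt|`, for every `δ > 0` there are
`S' ⊆ S_opt` with `|S'| ≥ k/2` and `T' ⊆ T_opt` such that every `v ∈ T'` has at
least `δd/2` neighbors in `S'`, and every `u ∈ S'` has at most `δr` neighbors in
`T_opt \ T'`. -/
theorem pruning_claim {U V : Type*} [Fintype U] [Fintype V] [DecidableEq U] [DecidableEq V]
    (Adj : U → V → Prop) [∀ u v, Decidable (Adj u v)]
    (Sopt : Finset U) (k r : ℕ) (d : ℝ)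
    (hk : Sopt.card = k)
    (hdeg : ∀ u ∈ Sopt, (univ.filter fun v => Adj u v).card = r)
    (Topt : Finset V)
    (hTopt : Topt = univ.filter fun v => ∃ u ∈ Sopt, Adj u v)
    (hTne : Topt.Nonempty)
    (hd : d = (k * r : ℝ) / Topt.card)
    (δ : ℝ) (hδ : 0 < δ) :
    ∃ S' : Finset U, ∃ T' : Finset V, S' ⊆ Sopt ∧ T' ⊆ Topt ∧
      (k : ℝ) / 2 ≤ S'.card ∧
      (∀ v ∈ T', δ * d / 2 ≤ ((S'.filter fun u => Adj u v).card : ℝ)) ∧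
      (∀ u ∈ S', (((Topt \ T').filter fun v => Adj u v).card : ℝ) ≤ δ * r) := by
  classical
  have hTcard : 0 < (Topt.card : ℝ) := by exact_mod_cast card_pos.mpr hTne
  have hrpos : 0 < r := by
    obtain ⟨v, hv⟩ := hTne
    rw [hTopt, mem_filter] at hv
    obtain ⟨-, u, hu, huv⟩ := hv
    have h := hdeg u hu
    have hvmem : v ∈ univ.filter fun v => Adj u v := by simp [huv]
    have := card_pos.mpr ⟨v, hvmem⟩
    omega
  have hdTopt : d * Topt.card = k * r := by
    rw [hd, div_mul_cancel₀]; exact ne_of_gt hTcard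
  have hd0 : 0 ≤ d := by rw [hd]; positivity
  set E : Finset U → Finset V → ℕ :=
    fun S T => ∑ u ∈ S, ((Topt \ T).filter fun v => Adj u v).card with hE
  have key : ∀ S T, S ⊆ Sopt → T ⊆ Topt →
      (E S T : ℝ) + δ * r * ((k : ℝ) - S.card) ≤ δ * d / 2 * ((Topt \ T).card) →
      (k : ℝ) / 2 ≤ S.card := by
    intro S T hS hT hinv
    have hE0 : (0:ℝ) ≤ (E S T : ℝ) := Nat.cast_nonneg _
    have hcard : ((Topt \ T).card : ℝ) ≤ Topt.card := by
      exact_mod_cast card_le_card sdiff_subset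
    have h1 : δ * r * ((k : ℝ) - S.card) ≤ δ * d / 2 * Topt.card := by
      nlinarith [mul_le_mul_of_nonneg_left hcard (by positivity : (0:ℝ) ≤ δ * d / 2)]
    have h2 : δ * d / 2 * Topt.card = δ * ((k:ℝ) * r) / 2 := by
      rw [div_mul_eq_mul_div, mul_assoc, hdTopt]
    rw [h2] at h1
    have hr : (0:ℝ) < r := by exact_mod_cast hrpos
    nlinarith [mul_pos hδ hr]
  suffices H : ∀ n (S : Finset U) (T : Finset V), S ⊆ Sopt → T ⊆ Topt →
      S.card + T.card ≤ n →
      (E S T : ℝ) + δ * r * ((k : ℝ) - S.card) ≤ δ * d / 2 * ((Topt \ T).card) →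
      ∃ S' : Finset U, ∃ T' : Finset V, S' ⊆ Sopt ∧ T' ⊆ Topt ∧
        (k : ℝ) / 2 ≤ S'.card ∧
        (∀ v ∈ T', δ * d / 2 ≤ ((S'.filter fun u => Adj u v).card : ℝ)) ∧
        (∀ u ∈ S', (((Topt \ T').filter fun v => Adj u v).card : ℝ) ≤ δ * r) by
    apply H (Sopt.card + Topt.card) Sopt Topt Subset.rfl Subset.rfl le_rfl
    simp [hE, hk, sdiff_self]
  intro n
  induction n with
  | zero =>
    intro S T hS hT hc hinv
    have hS0 : S = ∅ := card_eq_zero.mp (by omega)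
    have hT0 : T = ∅ := card_eq_zero.mp (by omega)
    exact ⟨S, T, hS, hT, key S T hS hT hinv, by simp [hT0], by simp [hS0]⟩
  | succ n ih =>
    intro S T hS hT hc hinv
    by_cases h1 : ∀ v ∈ T, δ * d / 2 ≤ ((S.filter fun u => Adj u v).card : ℝ)
    · by_cases h2 : ∀ u ∈ S, (((Topt \ T).filter fun v => Adj u v).card : ℝ) ≤ δ * r
      · exact ⟨S, T, hS, hT, key S T hS hT hinv, h1, h2⟩
      · push_neg at h2
        obtain ⟨u, hu, hub⟩ := h2
        have hSpos : 1 ≤ S.card := card_pos.mpr ⟨u, hu⟩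
        apply ih (S.erase u) T (fun x hx => hS (mem_of_mem_erase hx)) hT
          (by have := card_erase_of_mem hu; omega)
        have hEe : E S T = E (S.erase u) T + ((Topt \ T).filter fun v => Adj u v).card := by
          rw [hE]; exact (Finset.sum_erase_add S _ hu).symm
        have hcS : ((S.erase u).card : ℝ) = (S.card : ℝ) - 1 := by
          rw [card_erase_of_mem hu]; push_cast [hSpos]; ring
        rw [hcS]
        rw [hEe] at hinv
        push_cast at hinv ⊢
        linarith
    · push_neg at h1
      obtain ⟨v, hv, hvb⟩ := h1
      have hTpos : 1 ≤ T.card := card_pos.mpr ⟨v, hv⟩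
      apply ih S (T.erase v) hS (fun x hx => hT (mem_of_mem_erase hx))
        (by have := card_erase_of_mem hv; omega)
      have hvT : v ∈ Topt := hT hv
      have hvnot : v ∉ Topt \ T := by simp [mem_sdiff, hv]
      have hset : Topt \ T.erase v = insert v (Topt \ T) := by
        ext x
        simp only [mem_sdiff, mem_erase, mem_insert, not_and]
        by_cases hx : x = v <;> simp [hx, hvT]
      have hEe : E S (T.erase v) = E S T + (S.filter fun u => Adj u v).card := by
        rw [hE]; simp only
        rw [hset]
        have hterm : ∀ u ∈ S, ((insert v (Topt \ T)).filter fun w => Adj u w).card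
            = ((Topt \ T).filter fun w => Adj u w).card + (if Adj u v then 1 else 0) := by
          intro u _
          by_cases ha : Adj u v
          · rw [filter_insert, if_pos ha, card_insert_of_notMem (by simp [mem_filter, hvnot, mem_sdiff, hv]), if_pos ha]
          · simp [filter_insert, ha]
        rw [Finset.sum_congr rfl hterm, Finset.sum_add_distrib]
        congr 1
        rw [card_filter]
      have hcT : ((Topt \ T.erase v).card : ℝ) = ((Topt \ T).card : ℝ) + 1 := by
        rw [hset, card_insert_of_notMem hvnot]; push_cast; ring
      rw [hEe, hcT]
      push_cast at hvb ⊢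
      linarith
end

section
/- Let x be a nonnegative function on subsets of a finite set W with the decay property: x_{A∪{w}} ≤ α·x_A for all A with |A| ≤ r and all w ∉ A, where α = 1/(2(r+1)). Then for any disjoint sets S, T with |S| + |T| ≤ r + 1 (and with the additional property that x_{S∪J∪{w}} ≤ α·x_{S∪J} for all relevant J ⊆ T and w ∈ T \ J), the alternating sum x_{S,T} = Σ_{J⊆T} (−1)^{|J|} x_{S∪J} satisfies x_S/2 ≤ x_{S,T} ≤ x_S. -/
open Finset

private theorem sheraliAdams_aux {W : Type*} [DecidableEq W]
    (x : Finset W → ℝ) (α : ℝ) (r : ℕ)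
    (hα : α = 1 / (2 * ((r : ℝ) + 1)))
    (hnonneg : ∀ A : Finset W, 0 ≤ x A)
    (hdecay : ∀ A : Finset W, A.card ≤ r → ∀ w ∉ A, x (insert w A) ≤ α * x A) :
    ∀ (T S : Finset W), Disjoint S T → S.card + T.card ≤ r + 1 →
      x S * (1 - T.card * α) ≤ ∑ J ∈ T.powerset, (-1:ℝ)^J.card * x (S ∪ J) ∧
      ∑ J ∈ T.powerset, (-1:ℝ)^J.card * x (S ∪ J) ≤ x S := by
  have hr1 : (0:ℝ) < (r:ℝ) + 1 := by positivity
  have hαpos : 0 < α := by rw [hα]; positivity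
  intro T
  induction T using Finset.induction_on with
  | empty => intro S _ _; simp
  | @insert a s ha ih =>
    intro S hdisj hcard
    have haS : a ∉ S := (Finset.disjoint_insert_right.mp hdisj).1
    have hdisjs : Disjoint S s := hdisj.mono_right (subset_insert a s)
    have hdisj' : Disjoint (insert a S) s := by
      rw [disjoint_insert_left]; exact ⟨ha, hdisjs⟩
    have hcard' : s.card ≤ r := by
      have := card_insert_of_notMem ha
      omega
    have hScard : S.card ≤ r := by
      have := card_insert_of_notMem ha
      omega
    have hcards : S.card + s.card ≤ r + 1 := by
      have := card_insert_of_notMem ha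
      omega
    have hcards' : (insert a S).card + s.card ≤ r + 1 := by
      rw [card_insert_of_notMem haS]
      have := card_insert_of_notMem ha
      omega
    obtain ⟨ih1l, ih1u⟩ := ih S hdisjs hcards
    obtain ⟨ih2l, ih2u⟩ := ih (insert a S) hdisj' hcards'
    have hdec : x (insert a S) ≤ α * x S := hdecay S hScard a haS
    -- split the sum
    have hsplit : ∑ J ∈ (insert a s).powerset, (-1:ℝ)^J.card * x (S ∪ J)
        = (∑ J ∈ s.powerset, (-1:ℝ)^J.card * x (S ∪ J))
          - ∑ J ∈ s.powerset, (-1:ℝ)^J.card * x (insert a S ∪ J) := by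
      rw [Finset.sum_powerset_insert ha]
      have : ∀ J ∈ s.powerset, (-1:ℝ)^(insert a J).card * x (S ∪ insert a J)
          = -((-1:ℝ)^J.card * x (insert a S ∪ J)) := by
        intro J hJ
        have haJ : a ∉ J := fun h => ha (mem_powerset.mp hJ h)
        rw [card_insert_of_notMem haJ, union_insert, ← insert_union, pow_succ]
        ring
      rw [Finset.sum_congr rfl this, Finset.sum_neg_distrib]
      ring
    have hhalf : ∀ k : ℕ, k ≤ r + 1 → (k : ℝ) * α ≤ 1 / 2 := by
      intro k hk
      have hk' : (k:ℝ) ≤ (r:ℝ) + 1 := by exact_mod_cast hk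
      rw [hα, mul_one_div, div_le_div_iff₀ (by positivity) (by norm_num : (0:ℝ) < 2)]
      nlinarith
    have h1 : 0 ≤ 1 - (s.card : ℝ) * α := by
      have := hhalf s.card (by omega)
      linarith
    constructor
    · rw [hsplit, card_insert_of_notMem ha]
      push_cast
      have : ∑ J ∈ s.powerset, (-1:ℝ)^J.card * x (insert a S ∪ J) ≤ α * x S :=
        le_trans ih2u hdec
      nlinarith [hnonneg S]
    · rw [hsplit]
      have h2 : 0 ≤ ∑ J ∈ s.powerset, (-1:ℝ)^J.card * x (insert a S ∪ J) := by
        refine le_trans ?_ ih2l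
        have := hnonneg (insert a S)
        nlinarith
      linarith

/-- Sherali–Adams approximation claim: if `x` is a nonnegative set function with the
decay property `x_{A∪{w}} ≤ α·x_A` (for `|A| ≤ r`, `w ∉ A`) where `α = 1/(2(r+1))`,
then for disjoint `S, T` with `|S| + |T| ≤ r + 1`, the alternating sum
`x_{S,T} = Σ_{J⊆T} (−1)^{|J|} x_{S∪J}` satisfies `x_S/2 ≤ x_{S,T} ≤ x_S`. -/
theorem sheraliAdams_var_approx {W : Type*} [DecidableEq W]
    (x : Finset W → ℝ) (α : ℝ) (r : ℕ)
    (hα : α = 1 / (2 * ((r : ℝ) + 1)))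
    (hnonneg : ∀ A : Finset W, 0 ≤ x A)
    (hdecay : ∀ A : Finset W, A.card ≤ r → ∀ w ∉ A, x (insert w A) ≤ α * x A)
    (S T : Finset W) (hdisj : Disjoint S T) (hcard : S.card + T.card ≤ r + 1) :
    x S / 2 ≤ ∑ J ∈ T.powerset, (-1 : ℝ) ^ J.card * x (S ∪ J) ∧
      ∑ J ∈ T.powerset, (-1 : ℝ) ^ J.card * x (S ∪ J) ≤ x S := by
  obtain ⟨hl, hu⟩ := sheraliAdams_aux x α r hα hnonneg hdecay T S hdisj hcard
  refine ⟨le_trans ?_ hl, hu⟩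
  have hr1 : (0:ℝ) < (r:ℝ) + 1 := by positivity
  have hT : (T.card : ℝ) * α ≤ 1 / 2 := by
    have hk0 : T.card ≤ r + 1 := by omega
    have hk : (T.card : ℝ) ≤ (r:ℝ) + 1 := by exact_mod_cast hk0
    rw [hα, mul_one_div, div_le_div_iff₀ (by positivity) (by norm_num : (0:ℝ) < 2)]
    nlinarith
  nlinarith [hnonneg S]
end

section
/- Let G = (V, E) be a graph, let S* ⊆ V be nonempty with |S*| ≤ k, and let L = N(S*) \ S*. Then |E(S*, V \ S*)| ≤ |L| · |S*|. Consequently, if a set S with |S| ≤ k satisfies |E(S, V\S)|/|S| ≤ C·|L| (a C-approximation to the least edge expansion among sets of size ≤ k, using that S* has edge expansion at most |L|), then the vertex expansion of S satisfies |N(S)\S|/|S| ≤ C·k·(|N(S*)\S*|/|S*|). -/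
open Finset

lemma cut_le_card_L {V : Type*} [Fintype V] [DecidableEq V]
    (G : SimpleGraph V) [DecidableRel G.Adj] (A : Finset V) :
    (∑ u ∈ A, ((univ \ A).filter fun v => G.Adj u v).card : ℕ)
      ≤ ((univ.filter fun v => ∃ u ∈ A, G.Adj u v) \ A).card * A.card := by
  calc (∑ u ∈ A, ((univ \ A).filter fun v => G.Adj u v).card : ℕ)
      ≤ ∑ _u ∈ A, ((univ.filter fun v => ∃ u ∈ A, G.Adj u v) \ A).card := by
        apply Finset.sum_le_sum
        intro u hu
        apply Finset.card_le_card
        intro v hv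
        simp only [mem_filter, mem_sdiff, mem_univ, true_and] at hv ⊢
        exact ⟨⟨u, hu, hv.2⟩, hv.1⟩
    _ = ((univ.filter fun v => ∃ u ∈ A, G.Adj u v) \ A).card * A.card := by
        rw [Finset.sum_const, smul_eq_mul, mul_comm]

lemma vexp_le_cut {V : Type*} [Fintype V] [DecidableEq V]
    (G : SimpleGraph V) [DecidableRel G.Adj] (A : Finset V) :
    ((univ.filter fun v => ∃ u ∈ A, G.Adj u v) \ A).card
      ≤ (∑ u ∈ A, ((univ \ A).filter fun v => G.Adj u v).card : ℕ) := by
  have hsub : (univ.filter fun v => ∃ u ∈ A, G.Adj u v) \ A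
      ⊆ A.biUnion fun u => (univ \ A).filter fun v => G.Adj u v := by
    intro v hv
    simp only [mem_sdiff, mem_filter, mem_univ, true_and, mem_biUnion] at hv ⊢
    obtain ⟨⟨u, hu, hadj⟩, hvA⟩ := hv
    exact ⟨u, hu, by simp [hvA, hadj]⟩
  exact le_trans (Finset.card_le_card hsub) (Finset.card_biUnion_le)

/-- Key inequality of the SSVE-to-SSE reduction: for nonempty `S* ⊆ V` with
`|S*| ≤ k` and `L = N(S*) \ S*`, we have `|E(S*, V\S*)| ≤ |L|·|S*|`; consequently,
if a nonempty set `S` with `|S| ≤ k` satisfies `|E(S, V\S)|/|S| ≤ C·|L|`, then its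
vertex expansion satisfies `|N(S)\S|/|S| ≤ C·k·(|N(S*)\S*|/|S*|)`.
Cut edges out of `A` are counted as `Σ_{u ∈ A} |N(u) \ A|`. -/
theorem ssve_to_sse_reduction {V : Type*} [Fintype V] [DecidableEq V]
    (G : SimpleGraph V) [DecidableRel G.Adj] (k : ℕ) (C : ℝ) (hC : 0 ≤ C)
    (Sstar S : Finset V)
    (hSstar : Sstar.Nonempty) (hSstark : Sstar.card ≤ k)
    (hSne : S.Nonempty) (hSk : S.card ≤ k)
    (happrox : ((∑ u ∈ S, ((univ \ S).filter fun v => G.Adj u v).card : ℕ) : ℝ) / S.card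
      ≤ C * (((univ.filter fun v => ∃ u ∈ Sstar, G.Adj u v) \ Sstar).card : ℝ)) :
    ((∑ u ∈ Sstar, ((univ \ Sstar).filter fun v => G.Adj u v).card : ℕ) : ℝ)
        ≤ (((univ.filter fun v => ∃ u ∈ Sstar, G.Adj u v) \ Sstar).card : ℝ) * Sstar.card ∧
      (((univ.filter fun v => ∃ u ∈ S, G.Adj u v) \ S).card : ℝ) / S.card
        ≤ C * k *
          ((((univ.filter fun v => ∃ u ∈ Sstar, G.Adj u v) \ Sstar).card : ℝ) / Sstar.card) := by
  constructor
  · exact_mod_cast cut_le_card_L G Sstar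
  · set L : ℝ := (((univ.filter fun v => ∃ u ∈ Sstar, G.Adj u v) \ Sstar).card : ℝ)
    have hL : 0 ≤ L := Nat.cast_nonneg _
    have hScard : (0:ℝ) < S.card := by exact_mod_cast Finset.card_pos.mpr hSne
    have hSstarcard : (0:ℝ) < Sstar.card := by exact_mod_cast Finset.card_pos.mpr hSstar
    have h1 : (((univ.filter fun v => ∃ u ∈ S, G.Adj u v) \ S).card : ℝ) / S.card
        ≤ C * L := by
      refine le_trans ?_ happrox
      apply div_le_div_of_nonneg_right ?_ hScard.le
      exact_mod_cast vexp_le_cut G S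
    refine h1.trans ?_
    rw [mul_assoc]
    apply mul_le_mul_of_nonneg_left ?_ hC
    rw [← mul_div_assoc, le_div_iff₀ hSstarcard]
    have : (Sstar.card : ℝ) ≤ (k : ℝ) := by exact_mod_cast hSstark
    nlinarith
end
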